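/- Let (D_cf, C_cf) be any cut-free cycle-normal CLKID^ω_a proof of the sequent Add2(x,y,z) ⊢ Add1(x,y,z) and let Γ ⊢ Δ be any sequent occurring in D_cf. Let A(Γ ⊢ Δ) be the set of terms a such that Add2(a,b,c) ∈ Γ, or Add1(a,b,c) ∈ Δ, or a = 0, and let BC(Γ ⊢ Δ) be the set of second and third arguments b, c of atoms Add2(a,b,c) ∈ Γ or Add1(a,b,c) ∈ Δ. Then t ∈ A(Γ ⊢ Δ) and u ∈ BC(Γ ⊢ Δ) imply t !~_Γ u. -/

import Mathlib

namespace CLKID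

/-- Terms of the language: variables, the constant `0`, and the unary function `s`. -/
inductive Tm : Type where
  | var : ℕ → Tm
  | zero : Tm
  | s : Tm → Tm
deriving DecidableEq

/-- `sIter n t` is the term `s^n t`. -/
def sIter : ℕ → Tm → Tm
  | 0, t => t
  | n + 1, t => Tm.s (sIter n t)

/-- Substitution on terms. -/
def Tm.subst (θ : ℕ → Tm) : Tm → Tm
  | .var x => θ x
  | .zero => .zero
  | .s t => .s (t.subst θ)

/-- Free variables of a term. -/
def Tm.fv : Tm → Set ℕ
  | .var x => {x}
  | .zero => ∅
  | .s t => t.fv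

/-- Subterms of a term. -/
def Tm.sub : Tm → Set Tm
  | .var x => {Tm.var x}
  | .zero => {Tm.zero}
  | .s t => insert (Tm.s t) t.sub

/-- The variable of a term (`none` if the term is of the form `s^n 0`). -/
def Tm.varOf : Tm → Option ℕ
  | .var x => some x
  | .zero => none
  | .s t => t.varOf

/-- Formulas: equations, the two inductive-predicate atoms `Add1`/`Add2`,
    and the usual first-order connectives and quantifiers. -/
inductive Fm : Type where
  | eq : Tm → Tm → Fm
  | add1 : Tm → Tm → Tm → Fm
  | add2 : Tm → Tm → Tm → Fm
  | not : Fm → Fm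
  | and : Fm → Fm → Fm
  | or : Fm → Fm → Fm
  | imp : Fm → Fm → Fm
  | all : ℕ → Fm → Fm
  | ex : ℕ → Fm → Fm
deriving DecidableEq

/-- Substitution on formulas. -/
def Fm.subst (θ : ℕ → Tm) : Fm → Fm
  | .eq t u => .eq (t.subst θ) (u.subst θ)
  | .add1 a b c => .add1 (a.subst θ) (b.subst θ) (c.subst θ)
  | .add2 a b c => .add2 (a.subst θ) (b.subst θ) (c.subst θ)
  | .not φ => .not (φ.subst θ)
  | .and φ ψ => .and (φ.subst θ) (ψ.subst θ)
  | .or φ ψ => .or (φ.subst θ) (ψ.subst θ)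
  | .imp φ ψ => .imp (φ.subst θ) (ψ.subst θ)
  | .all x φ => .all x (φ.subst (Function.update θ x (Tm.var x)))
  | .ex x φ => .ex x (φ.subst (Function.update θ x (Tm.var x)))

/-- Free variables of a formula. -/
def Fm.fv : Fm → Set ℕ
  | .eq t u => t.fv ∪ u.fv
  | .add1 a b c => a.fv ∪ b.fv ∪ c.fv
  | .add2 a b c => a.fv ∪ b.fv ∪ c.fv
  | .not φ => φ.fv
  | .and φ ψ => φ.fv ∪ ψ.fv
  | .or φ ψ => φ.fv ∪ ψ.fv
  | .imp φ ψ => φ.fv ∪ ψ.fv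
  | .all x φ => φ.fv \ {x}
  | .ex x φ => φ.fv \ {x}

/-- Terms occurring in a formula. -/
def Fm.tms : Fm → Set Tm
  | .eq t u => t.sub ∪ u.sub
  | .add1 a b c => a.sub ∪ b.sub ∪ c.sub
  | .add2 a b c => a.sub ∪ b.sub ∪ c.sub
  | .not φ => φ.tms
  | .and φ ψ => φ.tms ∪ ψ.tms
  | .or φ ψ => φ.tms ∪ ψ.tms
  | .imp φ ψ => φ.tms ∪ ψ.tms
  | .all _ φ => φ.tms
  | .ex _ φ => φ.tms

/-- The substitution `[x := t]`. -/
def sub1 (x : ℕ) (t : Tm) : ℕ → Tm := fun y => if y = x then t else Tm.var y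

/-- The simultaneous substitution `[v1 := t, v2 := u]`. -/
def sub2 (v1 v2 : ℕ) (t u : Tm) : ℕ → Tm :=
  fun z => if z = v1 then t else if z = v2 then u else Tm.var z

/-- `≡_Γ`: the smallest congruence relation on terms containing all pairs `(t, u)`
    with the equation `t = u` in `Γ`. -/
inductive EqvTm (Γ : Set Fm) : Tm → Tm → Prop where
  | base {t u : Tm} : Fm.eq t u ∈ Γ → EqvTm Γ t u
  | refl (t : Tm) : EqvTm Γ t t
  | symm {t u : Tm} : EqvTm Γ t u → EqvTm Γ u t
  | trans {t u v : Tm} : EqvTm Γ t u → EqvTm Γ u v → EqvTm Γ t v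
  | sCongr {t u : Tm} : EqvTm Γ t u → EqvTm Γ (Tm.s t) (Tm.s u)

/-- `t ~_Γ u` : `s^n t ≡_Γ s^m u` for some naturals `n`, `m`. -/
def DepTm (Γ : Set Fm) (t u : Tm) : Prop := ∃ n m : ℕ, EqvTm Γ (sIter n t) (sIter m u)

/-- A sequent: a pair of finite sets of formulas. -/
structure Seq where
  ant : Finset Fm
  suc : Finset Fm

/-- The antecedent of a sequent, as a set of formulas. -/
def antSet (S : Seq) : Set Fm := ↑S.ant

/-- `[Γ]` from Lemma on chains: `{ s^n t1 = s^n t2 | t1 = t2 ∈ Γ or t2 = t1 ∈ Γ }`. -/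
def brkt (Γ : Set Fm) : Set Fm :=
  {φ | ∃ (n : ℕ) (t1 t2 : Tm), φ = Fm.eq (sIter n t1) (sIter n t2) ∧
        (Fm.eq t1 t2 ∈ Γ ∨ Fm.eq t2 t1 ∈ Γ)}

/-- `B1(Γ ⊢ Δ)` : second arguments of `Add1` atoms in the consequent. -/
def B1 (S : Seq) : Set Tm := {b | ∃ a c, Fm.add1 a b c ∈ S.suc}

/-- `C(Γ ⊢ Δ)` : third arguments of `Add2` atoms in the antecedent
    or `Add1` atoms in the consequent. -/
def Cset (S : Seq) : Set Tm :=
  {c | (∃ a b, Fm.add2 a b c ∈ S.ant) ∨ (∃ a b, Fm.add1 a b c ∈ S.suc)}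

/-- Index sequent. -/
def IndexSequent (S : Seq) : Prop :=
  (∀ t ∈ B1 S, ∀ u ∈ Cset S, ¬ DepTm (antSet S) t u) ∧
  (∀ b ∈ B1 S, ∀ b' ∈ B1 S, ∀ n m : ℕ, EqvTm (antSet S) (sIter n b) (sIter m b') → n = m)

/-! ## The cyclic proof systems `CLKID^ω` and `CLKID^ω_a` -/

/-- Rule labels; each label carries the instance data needed to describe the
    rule application (principal formulas, substitutions, case variables, ...).
    `bud` labels bud leaves of cyclic derivation trees. -/
inductive Rule : Type where
  | ax
  | weak
  | cut (φ : Fm)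
  | subst (θ : ℕ → Tm)
  | negL (φ : Fm)
  | negR (φ : Fm)
  | andL (φ ψ : Fm)
  | andR (φ ψ : Fm)
  | orL (φ ψ : Fm)
  | orR (φ ψ : Fm)
  | impL (φ ψ : Fm)
  | impR (φ ψ : Fm)
  | allL (x : ℕ) (t : Tm) (φ : Fm)
  | allR (x : ℕ) (φ : Fm)
  | exL (x : ℕ) (φ : Fm)
  | exR (x : ℕ) (t : Tm) (φ : Fm)
  | eqR (t : Tm)
  | eqL (v1 v2 : ℕ) (t u : Tm)
  | eqLa (v1 v2 : ℕ) (t u : Tm)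
  | add1R1
  | add1R2 (a b c : Tm)
  | add2R1
  | add2R2 (a b c : Tm)
  | caseAdd1 (a b c : Tm) (x y z : ℕ)
  | caseAdd2 (a b c : Tm) (x y z : ℕ)
  | bud

/-- `Inf r S L` : the sequent `S` follows from the list of premises `L`
    by the rule (instance) `r`. -/
inductive Inf : Rule → Seq → List Seq → Prop where
  | ax {Γ Δ : Finset Fm} :
      (Γ ∩ Δ).Nonempty → Inf .ax ⟨Γ, Δ⟩ []
  | weak {Γ Δ Γ' Δ' : Finset Fm} :
      Γ' ⊆ Γ → Δ' ⊆ Δ → Inf .weak ⟨Γ, Δ⟩ [⟨Γ', Δ'⟩]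
  | cut {Γ Δ : Finset Fm} {φ : Fm} :
      Inf (.cut φ) ⟨Γ, Δ⟩ [⟨Γ, insert φ Δ⟩, ⟨insert φ Γ, Δ⟩]
  | subst {Γ Δ : Finset Fm} {θ : ℕ → Tm} :
      Inf (.subst θ) ⟨Γ.image (Fm.subst θ), Δ.image (Fm.subst θ)⟩ [⟨Γ, Δ⟩]
  | negL {Γ Δ : Finset Fm} {φ : Fm} :
      Inf (.negL φ) ⟨insert (.not φ) Γ, Δ⟩ [⟨Γ, insert φ Δ⟩]
  | negR {Γ Δ : Finset Fm} {φ : Fm} :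
      Inf (.negR φ) ⟨Γ, insert (.not φ) Δ⟩ [⟨insert φ Γ, Δ⟩]
  | andL {Γ Δ : Finset Fm} {φ ψ : Fm} :
      Inf (.andL φ ψ) ⟨insert (.and φ ψ) Γ, Δ⟩ [⟨insert φ (insert ψ Γ), Δ⟩]
  | andR {Γ Δ : Finset Fm} {φ ψ : Fm} :
      Inf (.andR φ ψ) ⟨Γ, insert (.and φ ψ) Δ⟩ [⟨Γ, insert φ Δ⟩, ⟨Γ, insert ψ Δ⟩]
  | orL {Γ Δ : Finset Fm} {φ ψ : Fm} :
      Inf (.orL φ ψ) ⟨insert (.or φ ψ) Γ, Δ⟩ [⟨insert φ Γ, Δ⟩, ⟨insert ψ Γ, Δ⟩]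
  | orR {Γ Δ : Finset Fm} {φ ψ : Fm} :
      Inf (.orR φ ψ) ⟨Γ, insert (.or φ ψ) Δ⟩ [⟨Γ, insert φ (insert ψ Δ)⟩]
  | impL {Γ Δ : Finset Fm} {φ ψ : Fm} :
      Inf (.impL φ ψ) ⟨insert (.imp φ ψ) Γ, Δ⟩ [⟨Γ, insert φ Δ⟩, ⟨insert ψ Γ, Δ⟩]
  | impR {Γ Δ : Finset Fm} {φ ψ : Fm} :
      Inf (.impR φ ψ) ⟨Γ, insert (.imp φ ψ) Δ⟩ [⟨insert φ Γ, insert ψ Δ⟩]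
  | allL {Γ Δ : Finset Fm} {x : ℕ} {t : Tm} {φ : Fm} :
      Inf (.allL x t φ) ⟨insert (.all x φ) Γ, Δ⟩ [⟨insert (φ.subst (sub1 x t)) Γ, Δ⟩]
  | allR {Γ Δ : Finset Fm} {x : ℕ} {φ : Fm} :
      (∀ ψ ∈ Γ ∪ Δ, x ∉ Fm.fv ψ) →
      Inf (.allR x φ) ⟨Γ, insert (.all x φ) Δ⟩ [⟨Γ, insert φ Δ⟩]
  | exL {Γ Δ : Finset Fm} {x : ℕ} {φ : Fm} :
      (∀ ψ ∈ Γ ∪ Δ, x ∉ Fm.fv ψ) →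
      Inf (.exL x φ) ⟨insert (.ex x φ) Γ, Δ⟩ [⟨insert φ Γ, Δ⟩]
  | exR {Γ Δ : Finset Fm} {x : ℕ} {t : Tm} {φ : Fm} :
      Inf (.exR x t φ) ⟨Γ, insert (.ex x φ) Δ⟩ [⟨Γ, insert (φ.subst (sub1 x t)) Δ⟩]
  | eqR {Γ Δ : Finset Fm} {t : Tm} :
      Inf (.eqR t) ⟨Γ, insert (.eq t t) Δ⟩ []
  | eqL {Γ Δ : Finset Fm} {v1 v2 : ℕ} {t u : Tm} :
      Inf (.eqL v1 v2 t u)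
        ⟨insert (.eq t u) (Γ.image (Fm.subst (sub2 v1 v2 t u))),
          Δ.image (Fm.subst (sub2 v1 v2 t u))⟩
        [⟨Γ.image (Fm.subst (sub2 v1 v2 u t)), Δ.image (Fm.subst (sub2 v1 v2 u t))⟩]
  | eqLa {Γ Δ : Finset Fm} {v1 v2 : ℕ} {t u : Tm} :
      Inf (.eqLa v1 v2 t u)
        ⟨insert (.eq t u) (Γ.image (Fm.subst (sub2 v1 v2 t u))),
          Δ.image (Fm.subst (sub2 v1 v2 t u))⟩
        [⟨insert (.eq t u) (Γ.image (Fm.subst (sub2 v1 v2 u t))),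
          Δ.image (Fm.subst (sub2 v1 v2 u t))⟩]
  | add1R1 {Γ Δ : Finset Fm} {b : Tm} :
      Inf .add1R1 ⟨Γ, insert (.add1 .zero b b) Δ⟩ []
  | add1R2 {Γ Δ : Finset Fm} {a b c : Tm} :
      Inf (.add1R2 a b c) ⟨Γ, insert (.add1 (.s a) b (.s c)) Δ⟩ [⟨Γ, insert (.add1 a b c) Δ⟩]
  | add2R1 {Γ Δ : Finset Fm} {b : Tm} :
      Inf .add2R1 ⟨Γ, insert (.add2 .zero b b) Δ⟩ []
  | add2R2 {Γ Δ : Finset Fm} {a b c : Tm} :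
      Inf (.add2R2 a b c) ⟨Γ, insert (.add2 (.s a) b c) Δ⟩ [⟨Γ, insert (.add2 a (.s b) c) Δ⟩]
  | caseAdd1 {Γ Δ : Finset Fm} {a b c : Tm} {x y z : ℕ} :
      x ≠ y → x ≠ z → y ≠ z →
      (∀ ψ ∈ insert (Fm.add1 a b c) (Γ ∪ Δ), x ∉ Fm.fv ψ ∧ y ∉ Fm.fv ψ ∧ z ∉ Fm.fv ψ) →
      Inf (.caseAdd1 a b c x y z) ⟨insert (.add1 a b c) Γ, Δ⟩
        [⟨insert (.eq a .zero) (insert (.eq b (.var y)) (insert (.eq c (.var y)) Γ)), Δ⟩,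
         ⟨insert (.eq a (.s (.var x))) (insert (.eq b (.var y)) (insert (.eq c (.s (.var z)))
            (insert (.add1 (.var x) (.var y) (.var z)) Γ))), Δ⟩]
  | caseAdd2 {Γ Δ : Finset Fm} {a b c : Tm} {x y z : ℕ} :
      x ≠ y → x ≠ z → y ≠ z →
      (∀ ψ ∈ insert (Fm.add2 a b c) (Γ ∪ Δ), x ∉ Fm.fv ψ ∧ y ∉ Fm.fv ψ ∧ z ∉ Fm.fv ψ) →
      Inf (.caseAdd2 a b c x y z) ⟨insert (.add2 a b c) Γ, Δ⟩
        [⟨insert (.eq a .zero) (insert (.eq b (.var y)) (insert (.eq c (.var y)) Γ)), Δ⟩,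
         ⟨insert (.eq a (.s (.var x))) (insert (.eq b (.var y)) (insert (.eq c (.var z))
            (insert (.add2 (.var x) (.s (.var y)) (.var z)) Γ))), Δ⟩]

/-- A labeling of tree nodes (finite sequences of naturals) by sequents and rules;
    `none` means the node is not in the tree. -/
abbrev Lbl : Type := List ℕ → Option (Seq × Rule)

/-- The children of `σ` are labeled exactly by the premise list `prems`. -/
def childrenOK (f : Lbl) (σ : List ℕ) (prems : List Seq) : Prop :=
  (∀ i : Fin prems.length, ∃ r', f (σ ++ [(i : ℕ)]) = some (prems.get i, r')) ∧
  (∀ i : ℕ, prems.length ≤ i → f (σ ++ [i]) = none)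

/-- Derivation trees (possibly infinite): prefix-closed domain, each non-bud node
    is the conclusion of a rule whose premises label its children, buds are leaves. -/
structure DTree where
  label : Lbl
  root_def : label [] ≠ none
  prefix_closed : ∀ σ τ : List ℕ, label (σ ++ τ) ≠ none → label σ ≠ none
  wf : ∀ σ S r, label σ = some (S, r) →
    (r = Rule.bud ∧ ∀ i : ℕ, label (σ ++ [i]) = none) ∨
    (r ≠ Rule.bud ∧ ∃ prems, Inf r S prems ∧ childrenOK label σ prems)

/-- `σ` is a bud of the labeling `f`. -/
def budAt (f : Lbl) (σ : List ℕ) : Prop := ∃ S, f σ = some (S, Rule.bud)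

/-- `σ` is an inner node of `f` labeled with the sequent `S`. -/
def innerWith (f : Lbl) (σ : List ℕ) (S : Seq) : Prop :=
  ∃ r, f σ = some (S, r) ∧ r ≠ Rule.bud

/-- A pre-proof: a finite derivation tree together with a function assigning to
    each bud a companion, i.e. an inner node labeled with the same sequent. -/
structure PreProof where
  D : DTree
  fin : {σ : List ℕ | D.label σ ≠ none}.Finite
  C : List ℕ → List ℕ
  comp : ∀ σ S, D.label σ = some (S, Rule.bud) → innerWith D.label (C σ) S

/-- Cycle-normality: every companion is an ancestor of its bud. -/
def PreProof.CycleNormal (P : PreProof) : Prop :=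
  ∀ σ S, P.D.label σ = some (S, Rule.bud) → P.C σ <+: σ

/-- `T` is the tree-unfolding of the pre-proof `P`: it agrees with `P.D` on
    non-bud nodes, below a bud it continues as below the bud's companion, and it
    is empty on nodes not in `P.D` having no bud prefix. -/
def IsUnfolding (P : PreProof) (T : Lbl) : Prop :=
  (∀ σ, P.D.label σ ≠ none → ¬ budAt P.D.label σ → T σ = P.D.label σ) ∧
  (∀ σ₁ σ₂ : List ℕ, budAt P.D.label σ₁ → T (σ₁ ++ σ₂) = T (P.C σ₁ ++ σ₂)) ∧
  (∀ σ, P.D.label σ = none → (∀ σ₁, σ₁ <+: σ → ¬ budAt P.D.label σ₁) → T σ = none)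

/-- An infinite path in the labeling `f`. -/
def IsInfPath (f : Lbl) (p : ℕ → List ℕ) : Prop :=
  (∀ i, f (p i) ≠ none) ∧ (∀ i, ∃ n : ℕ, p (i + 1) = p i ++ [n])

/-- Atomic formulas with an inductive predicate. -/
def isIndAtom (φ : Fm) : Prop :=
  (∃ a b c, φ = Fm.add1 a b c) ∨ (∃ a b c, φ = Fm.add2 a b c)

/-- A progressing trace step: the traced formula is the principal formula of a
    case rule and its successor (in the corresponding case distinction, child `j`)
    is a case-descendant. -/
def progStep : Rule → ℕ → Fm → Fm → Prop := fun r j τ τ' =>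
  match r with
  | .caseAdd1 a b c x y z =>
      τ = Fm.add1 a b c ∧ j = 1 ∧ τ' = Fm.add1 (.var x) (.var y) (.var z)
  | .caseAdd2 a b c x y z =>
      τ = Fm.add2 a b c ∧ j = 1 ∧ τ' = Fm.add2 (.var x) (.s (.var y)) (.var z)
  | _ => False

/-- The trace connection relation between the traced formula at a conclusion of a
    rule `r` and the traced formula at its `j`-th premise. -/
def connStep : Rule → ℕ → Fm → Fm → Prop := fun r j τ τ' =>
  match r with
  | .subst θ => τ = Fm.subst θ τ'
  | .eqL v1 v2 t u =>
      ∃ F : Fm, τ = Fm.subst (sub2 v1 v2 t u) F ∧ τ' = Fm.subst (sub2 v1 v2 u t) F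
  | .eqLa v1 v2 t u =>
      ∃ F : Fm, τ = Fm.subst (sub2 v1 v2 t u) F ∧ τ' = Fm.subst (sub2 v1 v2 u t) F
  | .caseAdd1 a b c x y z => τ' = τ ∨ progStep (.caseAdd1 a b c x y z) j τ τ'
  | .caseAdd2 a b c x y z => τ' = τ ∨ progStep (.caseAdd2 a b c x y z) j τ τ'
  | _ => τ' = τ

/-- `τ` is a trace following the tail from `k` of the path `p` in `f`. -/
def IsTraceFrom (f : Lbl) (p : ℕ → List ℕ) (k : ℕ) (τ : ℕ → Fm) : Prop :=
  ∀ i, k ≤ i →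
    ∃ (S : Seq) (r : Rule) (j : ℕ), f (p i) = some (S, r) ∧ τ i ∈ S.ant ∧ isIndAtom (τ i) ∧
      p (i + 1) = p i ++ [j] ∧ connStep r j (τ i) (τ (i + 1))

/-- The trace `τ` progresses at position `i` of the path `p`. -/
def progAt (f : Lbl) (p : ℕ → List ℕ) (τ : ℕ → Fm) (i : ℕ) : Prop :=
  ∃ (S : Seq) (r : Rule) (j : ℕ), f (p i) = some (S, r) ∧ p (i + 1) = p i ++ [j] ∧
    progStep r j (τ i) (τ (i + 1))

/-- The global trace condition for a (possibly infinite) labeling `f`. -/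
def GTC (f : Lbl) : Prop :=
  ∀ p : ℕ → List ℕ, IsInfPath f p →
    ∃ (k : ℕ) (τ : ℕ → Fm), IsTraceFrom f p k τ ∧
      ∀ n : ℕ, ∃ i, n ≤ i ∧ k ≤ i ∧ progAt f p τ i

/-- A pre-proof is a proof when its tree-unfolding satisfies the
    global trace condition. -/
def PreProof.IsProof (P : PreProof) : Prop := ∃ T : Lbl, IsUnfolding P T ∧ GTC T

/-- Some rule satisfying `Q` occurs in the labeling `f`. -/
def usesRule (f : Lbl) (Q : Rule → Prop) : Prop := ∃ σ S r, f σ = some (S, r) ∧ Q r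

/-- No occurrence of (Cut). -/
def PreProof.CutFree (P : PreProof) : Prop :=
  ¬ usesRule P.D.label (fun r => ∃ φ, r = Rule.cut φ)

/-- No occurrence of (= L_a): the pre-proof is a `CLKID^ω` pre-proof. -/
def PreProof.NoEqLa (P : PreProof) : Prop :=
  ¬ usesRule P.D.label (fun r => ∃ v1 v2 t u, r = Rule.eqLa v1 v2 t u)

/-- No occurrence of (= L): the pre-proof is a `CLKID^ω_a` pre-proof. -/
def PreProof.NoEqL (P : PreProof) : Prop :=
  ¬ usesRule P.D.label (fun r => ∃ v1 v2 t u, r = Rule.eqL v1 v2 t u)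

/-- The conclusion of the pre-proof is the sequent `S`. -/
def PreProof.Concl (P : PreProof) (S : Seq) : Prop := ∃ r, P.D.label [] = some (S, r)

/-- Provability in `CLKID^ω`. -/
def ProvableW (S : Seq) : Prop :=
  ∃ P : PreProof, P.IsProof ∧ P.NoEqLa ∧ P.Concl S

/-- Provability in `CLKID^ω_a`. -/
def ProvableWa (S : Seq) : Prop :=
  ∃ P : PreProof, P.IsProof ∧ P.NoEqL ∧ P.Concl S

/-- Cut-free provability in `CLKID^ω`. -/
def CutFreeProvableW (S : Seq) : Prop :=
  ∃ P : PreProof, P.IsProof ∧ P.CutFree ∧ P.NoEqLa ∧ P.Concl S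

/-- The sequent `Add2(x, y, z) ⊢ Add1(x, y, z)`. -/
def goalSeq : Seq :=
  ⟨{Fm.add2 (Tm.var 0) (Tm.var 1) (Tm.var 2)}, {Fm.add1 (Tm.var 0) (Tm.var 1) (Tm.var 2)}⟩

/-- A cut-free cycle-normal `CLKID^ω_a` proof of `Add2(x,y,z) ⊢ Add1(x,y,z)`. -/
def IsCNProofOfGoal (P : PreProof) : Prop :=
  P.IsProof ∧ P.CutFree ∧ P.NoEqL ∧ P.CycleNormal ∧ P.Concl goalSeq

/-- The index of an `Add2` atom with second argument `b` in the sequent `S` is `⊥`. -/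
def IndexBot (S : Seq) (b : Tm) : Prop :=
  ∀ a' b' c', Fm.add1 a' b' c' ∈ S.suc → ¬ DepTm (antSet S) b b'

/-- `σ` is a switching point of `f`: the conclusion of a `(Case Add2)` rule whose
    principal formula has index `⊥`. -/
def SwitchingPoint (f : Lbl) (σ : List ℕ) : Prop :=
  ∃ S a b c x y z, f σ = some (S, Rule.caseAdd2 a b c x y z) ∧ IndexBot S b

/-- `σ` is the conclusion of a `(Case Add2)` rule in `f`. -/
def CaseAdd2At (f : Lbl) (σ : List ℕ) : Prop :=
  ∃ S a b c x y z, f σ = some (S, Rule.caseAdd2 a b c x y z)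

/-- The node `σ` of `f` is labeled with an index sequent. -/
def IndexSequentAt (f : Lbl) (σ : List ℕ) : Prop :=
  ∃ S r, f σ = some (S, r) ∧ IndexSequent S

/-- A finite index path `p 0, …, p N` in `f`:  its first sequent is an index
    sequent, and a step to the left premise (child `0`) of a `(Case Add2)` rule
    only happens at switching points. -/
def IsIndexPathUpTo (f : Lbl) (p : ℕ → List ℕ) (N : ℕ) : Prop :=
  (∀ i, i ≤ N → f (p i) ≠ none) ∧
  (∀ i, i < N → ∃ n : ℕ, p (i + 1) = p i ++ [n]) ∧
  IndexSequentAt f (p 0) ∧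
  (∀ i, i < N → CaseAdd2At f (p i) → p (i + 1) = p i ++ [0] → SwitchingPoint f (p i))

/-- An infinite index path in `f`. -/
def IsInfIndexPath (f : Lbl) (p : ℕ → List ℕ) : Prop :=
  IsInfPath f p ∧
  IndexSequentAt f (p 0) ∧
  (∀ i, CaseAdd2At f (p i) → p (i + 1) = p i ++ [0] → SwitchingPoint f (p i))

/-- The child index chosen by the rightmost path: the right assumption of
    `(Case Add2)`, the unique premise otherwise. -/
def rightIdx : Rule → ℕ := fun r =>
  match r with
  | .caseAdd2 _ _ _ _ _ _ => 1
  | _ => 0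

/-- One step of the rightmost path in `f`. -/
def RightStep (f : Lbl) (σ σ' : List ℕ) : Prop :=
  ∃ S r, f σ = some (S, r) ∧ σ' = σ ++ [rightIdx r] ∧ f σ' ≠ none

/-- `A(Γ ⊢ Δ)` of Lemma `abc_relations`. -/
def Aset (S : Seq) : Set Tm :=
  {a | (∃ b c, Fm.add2 a b c ∈ S.ant) ∨ (∃ b c, Fm.add1 a b c ∈ S.suc) ∨ a = Tm.zero}

/-- `BC(Γ ⊢ Δ)` of Lemma `abc_relations`. -/
def BCset (S : Seq) : Set Tm :=
  {t | (∃ a c, Fm.add2 a t c ∈ S.ant) ∨ (∃ a b, Fm.add2 a b t ∈ S.ant) ∨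
       (∃ a c, Fm.add1 a t c ∈ S.suc) ∨ (∃ a b, Fm.add1 a b t ∈ S.suc)}

/-- The rules that can occur in a cut-free cycle-normal `CLKID^ω_a` proof of
    `Add2(x,y,z) ⊢ Add1(x,y,z)` (plus bud labels). -/
def allowedRule (r : Rule) : Prop :=
  r = Rule.bud ∨ r = Rule.weak ∨ (∃ θ, r = Rule.subst θ) ∨
  (∃ v1 v2 t u, r = Rule.eqLa v1 v2 t u) ∨
  (∃ a b c x y z, r = Rule.caseAdd2 a b c x y z) ∨
  r = Rule.add1R1 ∨ (∃ a b c, r = Rule.add1R2 a b c)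

/-!
Along the proof, read upwards from `Add2(x,y,z) ⊢ Add1(x,y,z)`, every sequent is *separated*
by some predicate `Φ` on terms: `Φ` is invariant under `s` and under the equations of the
antecedent, holds of `0` and of all first arguments, and fails on all second and third
arguments; moreover antecedents consist of equations and `Add2` atoms and succedents of `Add1`
atoms. Such a `Φ` is constant on `~_Γ`-classes, which gives the claim. Every rule that can
occur preserves separation from conclusion to premises. For `(Case Add2)` the fresh variable
`x` is put on the side of the first arguments and `y`, `z` on the other side; for `(= L_a)` the
equation `t = u` survives in the premise, so `Φ` cannot tell the two substitution instances
apart.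
-/

/-- Formulas outside the allowed shape are mapped to `False`, so separation also records that
the antecedent consists of equations and `Add2` atoms. -/
def Fm.SepAnt (Φ : Tm → Prop) : Fm → Prop
  | .eq t u => (Φ t ↔ Φ u)
  | .add2 a b c => Φ a ∧ ¬Φ b ∧ ¬Φ c
  | _ => False

def Fm.SepSuc (Φ : Tm → Prop) : Fm → Prop
  | .add1 a b c => Φ a ∧ ¬Φ b ∧ ¬Φ c
  | _ => False

structure Separates (Φ : Tm → Prop) (S : Seq) : Prop where
  s_iff : ∀ t, Φ (.s t) ↔ Φ t
  zero : Φ .zero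
  ant : ∀ φ ∈ S.ant, φ.SepAnt Φ
  suc : ∀ φ ∈ S.suc, φ.SepSuc Φ

section Separation

variable {Φ Ψ : Tm → Prop} {S : Seq} {Γ Δ : Finset Fm}

lemma Fm.sepAnt_subst (θ : ℕ → Tm) (φ : Fm) :
    (φ.subst θ).SepAnt Φ ↔ φ.SepAnt (fun w => Φ (w.subst θ)) := by
  cases φ <;> rfl

lemma Fm.sepSuc_subst (θ : ℕ → Tm) (φ : Fm) :
    (φ.subst θ).SepSuc Φ ↔ φ.SepSuc (fun w => Φ (w.subst θ)) := by
  cases φ <;> rfl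

lemma Fm.sepAnt_congr {φ : Fm} (h : ∀ w, w.fv ⊆ φ.fv → (Φ w ↔ Ψ w)) :
    φ.SepAnt Φ ↔ φ.SepAnt Ψ := by
  cases φ with
  | eq t u =>
    simp only [Fm.fv] at h
    simp only [Fm.SepAnt, h t Set.subset_union_left, h u Set.subset_union_right]
  | add2 a b c =>
    simp only [Fm.fv] at h
    simp only [Fm.SepAnt, h a (Set.subset_union_left.trans Set.subset_union_left),
      h b (Set.subset_union_right.trans Set.subset_union_left), h c Set.subset_union_right]
  | _ => rfl

lemma Fm.sepSuc_congr {φ : Fm} (h : ∀ w, w.fv ⊆ φ.fv → (Φ w ↔ Ψ w)) :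
    φ.SepSuc Φ ↔ φ.SepSuc Ψ := by
  cases φ with
  | add1 a b c =>
    simp only [Fm.fv] at h
    simp only [Fm.SepSuc, h a (Set.subset_union_left.trans Set.subset_union_left),
      h b (Set.subset_union_right.trans Set.subset_union_left), h c Set.subset_union_right]
  | _ => rfl

namespace Separates

lemma sIter_iff (h : Separates Φ S) (n : ℕ) (t : Tm) : Φ (sIter n t) ↔ Φ t := by
  induction n with
  | zero => rfl
  | succ n ih => exact (h.s_iff _).trans ih

lemma iff_of_eqvTm (h : Separates Φ S) {t u : Tm} (htu : EqvTm (antSet S) t u) :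
    Φ t ↔ Φ u := by
  induction htu with
  | base hmem => exact h.ant _ hmem
  | refl t => rfl
  | symm _ ih => exact ih.symm
  | trans _ _ ih₁ ih₂ => exact ih₁.trans ih₂
  | sCongr _ ih => exact (h.s_iff _).trans (ih.trans (h.s_iff _).symm)

lemma of_mem_Aset (h : Separates Φ S) {t : Tm} (ht : t ∈ Aset S) : Φ t := by
  rcases ht with ⟨b, c, hmem⟩ | ⟨b, c, hmem⟩ | rfl
  · exact (h.ant _ hmem).1
  · exact (h.suc _ hmem).1
  · exact h.zero

lemma not_of_mem_BCset (h : Separates Φ S) {u : Tm} (hu : u ∈ BCset S) : ¬Φ u := by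
  rcases hu with ⟨a, c, hmem⟩ | ⟨a, b, hmem⟩ | ⟨a, c, hmem⟩ | ⟨a, b, hmem⟩
  · exact (h.ant _ hmem).2.1
  · exact (h.ant _ hmem).2.2
  · exact (h.suc _ hmem).2.1
  · exact (h.suc _ hmem).2.2

lemma not_depTm (h : Separates Φ S) {t u : Tm} (ht : t ∈ Aset S) (hu : u ∈ BCset S) :
    ¬DepTm (antSet S) t u := by
  rintro ⟨n, m, htu⟩
  have hΦ := h.iff_of_eqvTm htu
  rw [h.sIter_iff, h.sIter_iff] at hΦ
  exact h.not_of_mem_BCset hu (hΦ.mp (h.of_mem_Aset ht))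

lemma mono {Γ' Δ' : Finset Fm} (h : Separates Φ ⟨Γ, Δ⟩) (hΓ : Γ' ⊆ Γ) (hΔ : Δ' ⊆ Δ) :
    Separates Φ ⟨Γ', Δ'⟩ :=
  ⟨h.s_iff, h.zero, fun φ hφ => h.ant φ (hΓ hφ), fun φ hφ => h.suc φ (hΔ hφ)⟩

lemma insert_ant {φ : Fm} (h : Separates Φ ⟨Γ, Δ⟩) (hφ : φ.SepAnt Φ) :
    Separates Φ ⟨insert φ Γ, Δ⟩ := by
  refine ⟨h.s_iff, h.zero, fun ψ hψ => ?_, h.suc⟩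
  rcases Finset.mem_insert.mp hψ with rfl | hψ
  · exact hφ
  · exact h.ant ψ hψ

lemma insert_eq {t u : Tm} (h : Separates Φ ⟨Γ, Δ⟩) (htu : Φ t ↔ Φ u) :
    Separates Φ ⟨insert (.eq t u) Γ, Δ⟩ :=
  h.insert_ant htu

lemma subst_premise {θ : ℕ → Tm}
    (h : Separates Φ ⟨Γ.image (Fm.subst θ), Δ.image (Fm.subst θ)⟩) :
    Separates (fun w => Φ (w.subst θ)) ⟨Γ, Δ⟩ where
  s_iff t := h.s_iff (t.subst θ)
  zero := h.zero
  ant φ hφ := (Fm.sepAnt_subst θ φ).mp (h.ant _ (Finset.mem_image_of_mem _ hφ))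
  suc φ hφ := (Fm.sepSuc_subst θ φ).mp (h.suc _ (Finset.mem_image_of_mem _ hφ))

lemma add1R2_premise {a b c : Tm} (h : Separates Φ ⟨Γ, insert (.add1 (.s a) b (.s c)) Δ⟩) :
    Separates Φ ⟨Γ, insert (.add1 a b c) Δ⟩ := by
  refine ⟨h.s_iff, h.zero, h.ant, fun φ hφ => ?_⟩
  rcases Finset.mem_insert.mp hφ with rfl | hφ
  · obtain ⟨ha, hb, hc⟩ := h.suc _ (Finset.mem_insert_self _ _)
    exact ⟨(h.s_iff a).mp ha, hb, fun hc' => hc ((h.s_iff c).mpr hc')⟩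
  · exact h.suc φ (Finset.mem_insert_of_mem hφ)

end Separates

lemma iff_subst_sub2_swap (hs : ∀ w, Φ (.s w) ↔ Φ w) {t u : Tm} (htu : Φ t ↔ Φ u)
    (v₁ v₂ : ℕ) (w : Tm) : Φ (w.subst (sub2 v₁ v₂ t u)) ↔ Φ (w.subst (sub2 v₁ v₂ u t)) := by
  induction w with
  | var v =>
    simp only [Tm.subst, sub2]
    split_ifs
    · exact htu
    · exact htu.symm
    · rfl
  | zero => rfl
  | s w ih => exact (hs _).trans (ih.trans (hs _).symm)

lemma Separates.eqLa_premise {v₁ v₂ : ℕ} {t u : Tm}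
    (h : Separates Φ ⟨insert (.eq t u) (Γ.image (Fm.subst (sub2 v₁ v₂ t u))),
      Δ.image (Fm.subst (sub2 v₁ v₂ t u))⟩) :
    Separates Φ ⟨insert (.eq t u) (Γ.image (Fm.subst (sub2 v₁ v₂ u t))),
      Δ.image (Fm.subst (sub2 v₁ v₂ u t))⟩ := by
  have htu : Φ t ↔ Φ u := h.ant _ (Finset.mem_insert_self _ _)
  have hswap : (fun w : Tm => Φ (w.subst (sub2 v₁ v₂ u t))) =
      fun w => Φ (w.subst (sub2 v₁ v₂ t u)) :=
    funext fun w => propext (iff_subst_sub2_swap h.s_iff htu v₁ v₂ w).symm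
  refine ⟨h.s_iff, h.zero, fun φ hφ => ?_, fun φ hφ => ?_⟩
  · rcases Finset.mem_insert.mp hφ with rfl | hφ
    · exact htu
    obtain ⟨ψ, hψ, rfl⟩ := Finset.mem_image.mp hφ
    rw [Fm.sepAnt_subst, hswap, ← Fm.sepAnt_subst]
    exact h.ant _ (Finset.mem_insert_of_mem (Finset.mem_image_of_mem _ hψ))
  · obtain ⟨ψ, hψ, rfl⟩ := Finset.mem_image.mp hφ
    rw [Fm.sepSuc_subst, hswap, ← Fm.sepSuc_subst]
    exact h.suc _ (Finset.mem_image_of_mem _ hψ)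

def freshSplit (Φ : Tm → Prop) (x y z : ℕ) (w : Tm) : Prop :=
  x ∈ w.fv ∨ (Φ w ∧ y ∉ w.fv ∧ z ∉ w.fv)

lemma freshSplit_iff {x y z : ℕ} {ψ : Fm} (hψ : x ∉ ψ.fv ∧ y ∉ ψ.fv ∧ z ∉ ψ.fv) (w : Tm)
    (hw : w.fv ⊆ ψ.fv) : freshSplit Φ x y z w ↔ Φ w := by
  have hx : x ∉ w.fv := fun h => hψ.1 (hw h)
  have hy : y ∉ w.fv := fun h => hψ.2.1 (hw h)
  have hz : z ∉ w.fv := fun h => hψ.2.2 (hw h)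
  simp only [freshSplit, hx, hy, hz, not_false_eq_true, and_true, false_or]

lemma Separates.freshSplit {x y z : ℕ} (h : Separates Φ S)
    (hfresh : ∀ ψ ∈ S.ant ∪ S.suc, x ∉ ψ.fv ∧ y ∉ ψ.fv ∧ z ∉ ψ.fv) :
    Separates (freshSplit Φ x y z) S where
  s_iff t := by simp only [CLKID.freshSplit, Tm.fv, h.s_iff]
  zero := Or.inr ⟨h.zero, id, id⟩
  ant φ hφ := (Fm.sepAnt_congr (freshSplit_iff (hfresh φ (Finset.mem_union_left _ hφ)))).mpr
    (h.ant φ hφ)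
  suc φ hφ := (Fm.sepSuc_congr (freshSplit_iff (hfresh φ (Finset.mem_union_right _ hφ)))).mpr
    (h.suc φ hφ)

namespace Separates

variable {a b c : Tm} {x y z : ℕ}

lemma caseAdd2_left_premise (h : Separates Φ ⟨insert (.add2 a b c) Γ, Δ⟩)
    (hy : ¬Φ (.var y)) :
    Separates Φ
      ⟨insert (.eq a .zero) (insert (.eq b (.var y)) (insert (.eq c (.var y)) Γ)), Δ⟩ := by
  obtain ⟨ha, hb, hc⟩ := h.ant _ (Finset.mem_insert_self _ _)
  have hΓ := h.mono (Finset.subset_insert _ _) subset_rfl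
  exact ((hΓ.insert_eq (iff_of_false hc hy)).insert_eq (iff_of_false hb hy)).insert_eq
    (iff_of_true ha h.zero)

lemma caseAdd2_right_premise (h : Separates Φ ⟨insert (.add2 a b c) Γ, Δ⟩)
    (hx : Φ (.var x)) (hy : ¬Φ (.var y)) (hz : ¬Φ (.var z)) :
    Separates Φ ⟨insert (.eq a (.s (.var x))) (insert (.eq b (.var y)) (insert (.eq c (.var z))
      (insert (.add2 (.var x) (.s (.var y)) (.var z)) Γ))), Δ⟩ := by
  obtain ⟨ha, hb, hc⟩ := h.ant _ (Finset.mem_insert_self _ _)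
  have hΓ := h.mono (Finset.subset_insert _ _) subset_rfl
  have hnew : (Fm.add2 (.var x) (.s (.var y)) (.var z)).SepAnt Φ :=
    ⟨hx, fun hsy => hy ((h.s_iff _).mp hsy), hz⟩
  exact (((hΓ.insert_ant hnew).insert_eq (iff_of_false hc hz)).insert_eq
    (iff_of_false hb hy)).insert_eq (iff_of_true ha ((h.s_iff _).mpr hx))

end Separates

end Separation

lemma exists_separates_premise {r : Rule} {S : Seq} {prems : List Seq} {Φ : Tm → Prop}
    (hinf : Inf r S prems) (hcut : ∀ φ, r ≠ .cut φ) (heqL : ∀ v₁ v₂ t u, r ≠ .eqL v₁ v₂ t u)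
    (h : Separates Φ S) : ∀ S' ∈ prems, ∃ Ψ, Separates Ψ S' := by
  cases hinf with
  | ax | eqR | add1R1 | add2R1 => nofun
  | cut => exact absurd rfl (hcut _)
  | eqL => exact absurd rfl (heqL _ _ _ _)
  | negL | andL | orL | impL | allL | exL | caseAdd1 =>
    exact (h.ant _ (Finset.mem_insert_self _ _)).elim
  | negR | andR | orR | impR | allR | exR | add2R2 =>
    exact (h.suc _ (Finset.mem_insert_self _ _)).elim
  | weak hΓ hΔ => simpa using ⟨Φ, h.mono hΓ hΔ⟩
  | subst => simpa using ⟨_, h.subst_premise⟩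
  | eqLa => simpa using ⟨Φ, h.eqLa_premise⟩
  | add1R2 => simpa using ⟨Φ, h.add1R2_premise⟩
  | @caseAdd2 Γ Δ a b c x y z hxy hxz _ hfresh =>
    have hsplit := h.freshSplit (x := x) (y := y) (z := z)
      (fun ψ hψ => hfresh ψ (by rwa [Finset.insert_union] at hψ))
    have hx : freshSplit Φ x y z (.var x) := Or.inl rfl
    have hy : ¬freshSplit Φ x y z (.var y) := fun h' => h'.elim hxy fun h' => h'.2.1 rfl
    have hz : ¬freshSplit Φ x y z (.var z) := fun h' => h'.elim hxz fun h' => h'.2.2 rfl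
    simp only [List.mem_cons, List.not_mem_nil, or_false]
    rintro S' (rfl | rfl)
    · exact ⟨_, hsplit.caseAdd2_left_premise hy⟩
    · exact ⟨_, hsplit.caseAdd2_right_premise hx hy hz⟩

lemma separates_goalSeq : Separates (fun w => 1 ∉ w.fv ∧ 2 ∉ w.fv) goalSeq where
  s_iff _ := Iff.rfl
  zero := ⟨id, id⟩
  ant φ hφ := by
    rw [Finset.mem_singleton.mp hφ]
    simp [Fm.SepAnt, Tm.fv]
  suc φ hφ := by
    rw [Finset.mem_singleton.mp hφ]
    simp [Fm.SepSuc, Tm.fv]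

lemma DTree.forall_of_root {D : DTree} {I : Seq → Prop}
    (root : ∀ S r, D.label [] = some (S, r) → I S)
    (step : ∀ σ S r prems, D.label σ = some (S, r) → Inf r S prems → I S → ∀ S' ∈ prems, I S') :
    ∀ σ S r, D.label σ = some (S, r) → I S := by
  intro σ
  induction σ using List.reverseRecOn with
  | nil => exact root
  | append_singleton σ i ih =>
    intro S r hS
    obtain ⟨⟨S₀, r₀⟩, h₀⟩ :=
      Option.ne_none_iff_exists'.mp (D.prefix_closed σ [i] (by simp [hS]))
    rcases D.wf σ S₀ r₀ h₀ with ⟨-, hleaf⟩ | ⟨-, prems, hinf, hchildren, hbeyond⟩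
    · simp [hleaf i] at hS
    · by_cases hi : i < prems.length
      · obtain ⟨r', hchild⟩ := hchildren ⟨i, hi⟩
        obtain rfl : S = prems.get ⟨i, hi⟩ := by
          rw [hS] at hchild
          cases hchild
          rfl
        exact step σ S₀ r₀ prems h₀ hinf (ih S₀ r₀ h₀) _ (List.get_mem _ _)
      · simp [hbeyond i (not_lt.mp hi)] at hS

/-- In a cut-free cycle-normal `CLKID^ω_a` proof of
    `Add2(x,y,z) ⊢ Add1(x,y,z)`, for every sequent of the proof, the first
    arguments (and `0`) are `~_Γ`-unrelated to the second and third arguments. -/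
theorem abc_relations (P : PreProof) (hP : IsCNProofOfGoal P) :
    ∀ σ S r, P.D.label σ = some (S, r) →
      ∀ t ∈ Aset S, ∀ u ∈ BCset S, ¬ DepTm (antSet S) t u := by
  obtain ⟨-, hcut, heqL, -, r₀, hroot⟩ := hP
  intro σ S r hσ
  have hsep : ∃ Φ, Separates Φ S := by
    refine DTree.forall_of_root (I := fun S => ∃ Φ, Separates Φ S) ?_ ?_ σ S r hσ
    · intro S r h
      rw [hroot] at h
      cases h
      exact ⟨_, separates_goalSeq⟩
    · rintro σ S r prems hσ hinf ⟨Φ, hΦ⟩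
      exact exists_separates_premise hinf (fun φ hr => hcut ⟨σ, S, r, hσ, φ, hr⟩)
        (fun v₁ v₂ t u hr => heqL ⟨σ, S, r, hσ, v₁, v₂, t, u, hr⟩) hΦ
  obtain ⟨Φ, hΦ⟩ := hsep
  exact fun t ht u hu => hΦ.not_depTm ht hu

end CLKID
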